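/- arXiv:2502.18611 — 2 statements merged into one kernel-verified Lean document; each statement's English description precedes it below -/
import Mathlib

section
/- Let X ~ Bin(n,p) with 0 < p < 1 and 0 ≤ a ≤ p, n ≥ 1. Then |log₂ P(X ≤ a·n) + n·KL(a‖p)| ≤ 4·log₂(n+1) + max(0, log₂(p/(1-p))). -/
/-- Binary KL divergence in bits: KL(a‖p) (conventions 0·log 0 = 0 hold since Real.log 0 = 0). -/
noncomputable def klB (a p : ℝ) : ℝ :=
  a * Real.logb 2 (a / p) + (1 - a) * Real.logb 2 ((1 - a) / (1 - p))

/-- P(Bin(n,p) = k). -/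
noncomputable def binPMF (n k : ℕ) (p : ℝ) : ℝ :=
  (n.choose k : ℝ) * p ^ k * (1 - p) ^ (n - k)

/-- P(Bin(n,p) ≤ x). -/
noncomputable def binCDF (n : ℕ) (p x : ℝ) : ℝ :=
  ∑ k ∈ Finset.range (n + 1), if (k : ℝ) ≤ x then binPMF n k p else 0

/-- Binary entropy in bits. -/
noncomputable def binH (x : ℝ) : ℝ :=
  -x * Real.logb 2 x - (1 - x) * Real.logb 2 (1 - x)

lemma nat_term_le (n k : ℕ) (hk : k ≤ n) :
    ∀ i ≤ n, n.choose i * k^i * (n-k)^(n-i) ≤ n.choose k * k^k * (n-k)^(n-k) := by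
  set T : ℕ → ℕ := fun i => n.choose i * k^i * (n-k)^(n-i) with hT
  have key : ∀ i < n, T (i+1) * ((i+1) * (n-k)) = T i * ((n-i) * k) := by
    intro i hi
    have h1 : n.choose (i+1) * (i+1) = n.choose i * (n - i) := Nat.choose_succ_right_eq n i
    have h2 : (n-k)^(n-(i+1)) * (n-k) = (n-k)^(n-i) := by
      rw [← pow_succ]; congr 1; omega
    have h3 : k^(i+1) = k^i * k := pow_succ k i
    calc T (i+1) * ((i+1) * (n-k))
        = (n.choose (i+1) * (i+1)) * k^(i+1) * ((n-k)^(n-(i+1)) * (n-k)) := by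
          simp only [hT]; ring
      _ = (n.choose i * (n-i)) * (k^i * k) * (n-k)^(n-i) := by rw [h1, h2, h3]
      _ = T i * ((n-i) * k) := by simp only [hT]; ring
  have up : ∀ i < k, T i ≤ T (i+1) := by
    intro i hik
    rcases Nat.eq_or_lt_of_le hk with hkn | hkn
    · -- k = n, T i = 0
      have h0 : (n-k)^(n-i) = 0 := by
        have hnk : n - k = 0 := by omega
        rw [hnk]; exact Nat.zero_pow (by omega)
      have : T i = 0 := by simp only [hT]; rw [h0, Nat.mul_zero]
      omega
    · have hin : i < n := lt_of_lt_of_le hik hk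
      have hkey := key i hin
      have hmul : (i+1) * (n-k) ≤ (n-i) * k := by
        calc (i+1) * (n-k) ≤ k * (n-i) := Nat.mul_le_mul (by omega) (by omega)
          _ = (n-i) * k := Nat.mul_comm _ _
      have hpos : 0 < (i+1) * (n-k) := Nat.mul_pos (by omega) (by omega)
      have : T i * ((i+1) * (n-k)) ≤ T (i+1) * ((i+1) * (n-k)) := by
        calc T i * ((i+1) * (n-k)) ≤ T i * ((n-i) * k) := Nat.mul_le_mul_left _ hmul
          _ = T (i+1) * ((i+1) * (n-k)) := hkey.symm
      exact Nat.le_of_mul_le_mul_right this hpos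
  have down : ∀ i, k ≤ i → i < n → T (i+1) ≤ T i := by
    intro i hki hin
    have hkn : k < n := lt_of_le_of_lt hki hin
    have hkey := key i hin
    have hmul : (n-i) * k ≤ (i+1) * (n-k) := by
      calc (n-i) * k ≤ (n-k) * (i+1) := Nat.mul_le_mul (by omega) (by omega)
        _ = (i+1) * (n-k) := Nat.mul_comm _ _
    have hpos : 0 < (i+1) * (n-k) := Nat.mul_pos (by omega) (by omega)
    have : T (i+1) * ((i+1) * (n-k)) ≤ T i * ((i+1) * (n-k)) := by
      calc T (i+1) * ((i+1) * (n-k)) = T i * ((n-i) * k) := hkey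
        _ ≤ T i * ((i+1) * (n-k)) := Nat.mul_le_mul_left _ hmul
    exact Nat.le_of_mul_le_mul_right this hpos
  have upc : ∀ j, T (k - j) ≤ T k := by
    intro j
    induction j with
    | zero => simp
    | succ j ih =>
      rcases le_or_gt k j with h | h
      · have : k - (j+1) = k - j := by omega
        rw [this]; exact ih
      · have h1 : k - (j+1) < k := by omega
        have h2 : (k - (j+1)) + 1 = k - j := by omega
        calc T (k - (j+1)) ≤ T ((k - (j+1)) + 1) := up _ h1
          _ = T (k - j) := by rw [h2]
          _ ≤ T k := ih
  have downc : ∀ j, k + j ≤ n → T (k + j) ≤ T k := by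
    intro j
    induction j with
    | zero => simp
    | succ j ih =>
      intro hj
      calc T (k + (j+1)) = T ((k+j) + 1) := by ring_nf
        _ ≤ T (k + j) := down _ (by omega) (by omega)
        _ ≤ T k := ih (by omega)
  intro i hi
  rcases le_or_gt i k with h | h
  · have : i = k - (k - i) := by omega
    rw [this]; exact upc _
  · have : i = k + (i - k) := by omega
    rw [this]; exact downc _ (by omega)

lemma nat_pow_le (n k : ℕ) (hk : k ≤ n) :
    n^n ≤ (n+1) * (n.choose k * k^k * (n-k)^(n-k)) := by
  have hsum : n^n = ∑ i ∈ Finset.range (n+1), k^i * (n-k)^(n-i) * n.choose i := by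
    have : k + (n - k) = n := by omega
    rw [← this, add_pow]
    simp
  rw [hsum]
  calc ∑ i ∈ Finset.range (n+1), k^i * (n-k)^(n-i) * n.choose i
      ≤ ∑ _i ∈ Finset.range (n+1), n.choose k * k^k * (n-k)^(n-k) := by
        apply Finset.sum_le_sum
        intro i hi
        have hi' : i ≤ n := by simpa using Finset.mem_range_succ_iff.mp hi
        calc k^i * (n-k)^(n-i) * n.choose i = n.choose i * k^i * (n-k)^(n-i) := by ring
          _ ≤ _ := nat_term_le n k hk i hi'
    _ = (n+1) * (n.choose k * k^k * (n-k)^(n-k)) := by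
        rw [Finset.sum_const, Finset.card_range, smul_eq_mul]


-- x log x ≥ -1/2 for 0 < x ≤ 1 (natural log)
lemma xlogx_lb {x : ℝ} (hx : 0 < x) (hx1 : x ≤ 1) : -(1/2) ≤ x * Real.log x := by
  set s := Real.sqrt x with hs
  have hsp : 0 < s := Real.sqrt_pos.mpr hx
  have hsq : s ^ 2 = x := Real.sq_sqrt hx.le
  have hlog : Real.log x = 2 * Real.log s := by
    rw [← hsq, Real.log_pow]; push_cast; ring
  have h1 : Real.log s⁻¹ ≤ s⁻¹ - 1 := Real.log_le_sub_one_of_pos (by positivity)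
  rw [Real.log_inv] at h1
  have h2 : s * s⁻¹ = 1 := mul_inv_cancel₀ hsp.ne'
  have hls : 1 - s⁻¹ ≤ Real.log s := by linarith
  rw [hlog, ← hsq]
  nlinarith [sq_nonneg (2*s - 1), mul_le_mul_of_nonneg_left hls (sq_nonneg s)]

-- m log m - s log s ≤ (m - s)(log m + 1) for 0 < s ≤ m
lemma mlogm_ub {s m : ℝ} (hs : 0 < s) (hsm : s ≤ m) :
    m * Real.log m - s * Real.log s ≤ (m - s) * (Real.log m + 1) := by
  have hm : 0 < m := lt_of_lt_of_le hs hsm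
  have h := Real.log_le_sub_one_of_pos (show 0 < m / s by positivity)
  rw [Real.log_div hm.ne' hs.ne'] at h
  have h2 : s * (Real.log m - Real.log s) ≤ m - s := by
    calc s * (Real.log m - Real.log s) ≤ s * (m/s - 1) :=
          mul_le_mul_of_nonneg_left h hs.le
      _ = m - s := by field_simp
  nlinarith

lemma binPMF_nonneg {n k : ℕ} {p : ℝ} (hp : 0 ≤ p) (hp1 : p ≤ 1) : 0 ≤ binPMF n k p := by
  unfold binPMF
  have h : (0:ℝ) ≤ 1 - p := by linarith
  positivity

lemma cdf_ge_term (n k0 : ℕ) (p x : ℝ) (hp : 0 ≤ p) (hp1 : p ≤ 1) (hk0 : k0 ≤ n)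
    (hle : (k0 : ℝ) ≤ x) : binPMF n k0 p ≤ binCDF n p x := by
  unfold binCDF
  have hmem : k0 ∈ Finset.range (n+1) := Finset.mem_range_succ_iff.mpr hk0
  have h := Finset.single_le_sum (f := fun k : ℕ => if (k : ℝ) ≤ x then binPMF n k p else 0)
    (fun i _ => by
      split
      · exact binPMF_nonneg hp hp1
      · exact le_refl 0) hmem
  simpa [if_pos hle] using h

lemma chernoff (n : ℕ) (p a : ℝ) (hp : 0 < p) (hp1 : p < 1) (ha : 0 < a) (hap : a ≤ p) :
    Real.logb 2 (binCDF n p (a * n)) ≤ -((n : ℝ) * klB a p) := by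
  have ha1 : a < 1 := lt_of_le_of_lt hap hp1
  have hq : (0:ℝ) < 1 - p := by linarith
  have h1a : (0:ℝ) < 1 - a := by linarith
  set c : ℝ := a * (1 - p) / ((1 - a) * p) with hcdef
  have hc : 0 < c := by positivity
  have hc1 : c ≤ 1 := by
    rw [div_le_one (by positivity)]
    nlinarith
  have step1 : binCDF n p (a*n) ≤ ∑ k ∈ Finset.range (n+1),
      binPMF n k p * (c ^ k * c ^ (-(a*(n:ℝ)))) := by
    unfold binCDF
    apply Finset.sum_le_sum
    intro k _
    split_ifs with h
    · have heq : c ^ k * c ^ (-(a*(n:ℝ))) = c ^ ((k:ℝ) - a*n) := by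
        rw [← Real.rpow_natCast c k, ← Real.rpow_add hc]; ring_nf
      have h1 : (1:ℝ) ≤ c ^ k * c ^ (-(a*(n:ℝ))) := by
        rw [heq]
        exact Real.one_le_rpow_of_pos_of_le_one_of_nonpos hc hc1 (by linarith)
      nlinarith [binPMF_nonneg (n:=n) (k:=k) hp.le hp1.le]
    · have h2 : (0:ℝ) ≤ c ^ (-(a*(n:ℝ))) := (Real.rpow_pos_of_pos hc _).le
      have h3 := binPMF_nonneg (n:=n) (k:=k) hp.le hp1.le
      positivity
  have step2 : ∑ k ∈ Finset.range (n+1), binPMF n k p * (c ^ k * c ^ (-(a*(n:ℝ))))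
      = c ^ (-(a*(n:ℝ))) * (p*c + (1-p))^n := by
    rw [add_pow, Finset.mul_sum]
    apply Finset.sum_congr rfl
    intro k _
    unfold binPMF
    rw [mul_pow]
    ring
  have hpcq : p * c + (1-p) = (1-p) / (1 - a) := by
    rw [eq_div_iff h1a.ne', hcdef]
    field_simp
    ring
  have hcdfpos : 0 < binCDF n p (a*n) := by
    have h0 : (0:ℝ) < binPMF n 0 p := by
      unfold binPMF
      simp only [Nat.choose_zero_right, Nat.cast_one, pow_zero, Nat.sub_zero, one_mul, mul_one]
      positivity
    have h1 := cdf_ge_term n 0 p (a*n) hp.le hp1.le (Nat.zero_le n) (by simpa using mul_nonneg ha.le (Nat.cast_nonneg n))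
    linarith
  have hle : Real.logb 2 (binCDF n p (a*n))
      ≤ Real.logb 2 (c ^ (-(a*(n:ℝ))) * ((1-p)/(1-a))^n) := by
    apply Real.logb_le_logb_of_le one_lt_two hcdfpos
    calc binCDF n p (a*n) ≤ _ := step1
      _ = c ^ (-(a*(n:ℝ))) * (p*c + (1-p))^n := step2
      _ = _ := by rw [hpcq]
  refine hle.trans ?_
  have hexp : Real.logb 2 (c ^ (-(a*(n:ℝ))) * ((1-p)/(1-a))^n)
      = (-(a*n)) * Real.logb 2 c + n * Real.logb 2 ((1-p)/(1-a)) := by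
    rw [Real.logb_mul (ne_of_gt (Real.rpow_pos_of_pos hc _)) (by positivity), Real.logb_pow]
    congr 1
    unfold Real.logb
    rw [Real.log_rpow hc]
    ring
  rw [hexp]
  apply le_of_eq
  have hlogc : Real.log c = Real.log a + Real.log (1-p) - Real.log (1-a) - Real.log p := by
    rw [hcdef, Real.log_div (by positivity) (by positivity),
      Real.log_mul ha.ne' hq.ne', Real.log_mul h1a.ne' hp.ne']
    ring
  have hl2 : Real.log 2 ≠ 0 := (Real.log_pos one_lt_two).ne'
  unfold klB Real.logb
  rw [hlogc, Real.log_div hq.ne' h1a.ne', Real.log_div ha.ne' hp.ne',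
    Real.log_div h1a.ne' hq.ne']
  field_simp
  ring

set_option maxHeartbeats 2000000 in
theorem binomial_tail_two_sided (n : ℕ) (p a : ℝ) (hn : 1 ≤ n) (hp : 0 < p) (hp1 : p < 1)
    (ha0 : 0 ≤ a) (hap : a ≤ p) :
    |Real.logb 2 (binCDF n p (a * n)) + (n : ℝ) * klB a p|
      ≤ 4 * Real.logb 2 ((n : ℝ) + 1) + max 0 (Real.logb 2 (p / (1 - p))) := by
  have hq : (0:ℝ) < 1 - p := by linarith
  have hn1 : (1:ℝ) ≤ (n:ℝ) := by exact_mod_cast hn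
  have hRHS0 : 0 ≤ 4 * Real.logb 2 ((n : ℝ) + 1) + max 0 (Real.logb 2 (p / (1 - p))) := by
    have h1 : 0 ≤ Real.logb 2 ((n:ℝ)+1) := Real.logb_nonneg one_lt_two (by linarith)
    have h2 : (0:ℝ) ≤ max 0 (Real.logb 2 (p / (1 - p))) := le_max_left _ _
    linarith
  rcases eq_or_lt_of_le ha0 with h0 | ha
  · -- a = 0 case
    have h0' : a = 0 := h0.symm
    subst h0'
    have hcdf : binCDF n p (0*(n:ℝ)) = (1-p)^n := by
      unfold binCDF
      rw [Finset.sum_eq_single 0]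
      · rw [if_pos (by norm_num)]
        unfold binPMF
        simp
      · intro i _ hne
        have hi : (0:ℝ) < i := by exact_mod_cast Nat.pos_of_ne_zero hne
        rw [if_neg (by rw [zero_mul]; linarith)]
      · intro h
        exact absurd (Finset.mem_range.mpr (by omega)) h
    have hkl : klB 0 p = -Real.logb 2 (1-p) := by
      unfold klB
      rw [zero_div]
      simp [Real.logb_div one_ne_zero hq.ne']
    rw [hcdf, hkl, Real.logb_pow]
    simp only [mul_neg]
    rw [add_neg_cancel, abs_zero]
    exact hRHS0
  · -- a > 0
    have ha1 : a < 1 := lt_of_le_of_lt hap hp1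
    have htpos : 0 < a * (n:ℝ) := by positivity
    have htn : a * (n:ℝ) < n := by nlinarith
    set k0 : ℕ := ⌊a * (n:ℝ)⌋₊ with hk0def
    have hk0t : (k0:ℝ) ≤ a * n := Nat.floor_le htpos.le
    have htk0 : a * (n:ℝ) < k0 + 1 := Nat.lt_floor_add_one _
    have hk0n : k0 < n := by
      have : (k0:ℝ) < n := lt_of_le_of_lt hk0t htn
      exact_mod_cast this
    set m : ℕ := n - k0 with hmdef
    have hm1 : 1 ≤ m := by omega
    have hmcast : (m:ℝ) = (n:ℝ) - (k0:ℝ) := by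
      rw [hmdef]; push_cast [Nat.cast_sub hk0n.le]; ring
    have hspos : (0:ℝ) < (n:ℝ) - a * n := by linarith
    have hsm : (n:ℝ) - a * n ≤ (m:ℝ) := by rw [hmcast]; linarith
    have hm1' : (1:ℝ) ≤ (m:ℝ) := by exact_mod_cast hm1
    have hCpos : (0:ℝ) < (n.choose k0 : ℝ) := by
      exact_mod_cast Nat.choose_pos hk0n.le
    have hpmfpos : 0 < binPMF n k0 p := by
      unfold binPMF
      positivity
    have hL : (0:ℝ) < Real.log 2 := Real.log_pos one_lt_two
    have hL2 : (1:ℝ)/2 < Real.log 2 := by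
      have := Real.log_two_gt_d9; linarith
    have hlogb1 : (1:ℝ) ≤ Real.logb 2 ((n:ℝ)+1) := by
      have h := Real.logb_le_logb_of_le one_lt_two (by norm_num : (0:ℝ) < 2)
        (by linarith : (2:ℝ) ≤ (n:ℝ)+1)
      rwa [Real.logb_self_eq_one one_lt_two] at h
    have h1a : (0:ℝ) < 1 - a := by linarith
    have hA1 : Real.logb 2 (binPMF n k0 p) ≤ Real.logb 2 (binCDF n p (a*(n:ℝ))) :=
      Real.logb_le_logb_of_le one_lt_two hpmfpos
        (cdf_ge_term n k0 p (a*(n:ℝ)) hp.le hp1.le hk0n.le hk0t)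
    have hA2 : Real.logb 2 (binPMF n k0 p) = Real.logb 2 (n.choose k0 : ℝ)
        + (k0:ℝ) * Real.logb 2 p + (m:ℝ) * Real.logb 2 (1-p) := by
      unfold binPMF
      rw [← hmdef, Real.logb_mul (by positivity) (by positivity),
        Real.logb_mul hCpos.ne' (by positivity), Real.logb_pow, Real.logb_pow]
    have hk0pow : ((k0:ℝ))^k0 ≠ 0 := by
      rcases Nat.eq_zero_or_pos k0 with h | h
      · simp [h]
      · exact pow_ne_zero _ (by exact_mod_cast h.ne')
    have hA3 : (n:ℝ) * Real.logb 2 (n:ℝ) ≤ Real.logb 2 ((n:ℝ)+1)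
        + Real.logb 2 (n.choose k0 : ℝ) + (k0:ℝ) * Real.logb 2 (k0:ℝ)
        + (m:ℝ) * Real.logb 2 (m:ℝ) := by
      have hcast : ((n:ℝ))^n ≤ ((n:ℝ)+1) * ((n.choose k0 : ℝ) * ((k0:ℝ))^k0 * ((m:ℝ))^m) := by
        exact_mod_cast nat_pow_le n k0 hk0n.le
      have h1 := Real.logb_le_logb_of_le one_lt_two (by positivity : (0:ℝ) < ((n:ℝ))^n) hcast
      rw [Real.logb_pow, Real.logb_mul (by positivity)
          (by exact mul_ne_zero (mul_ne_zero hCpos.ne' hk0pow) (by positivity)),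
        Real.logb_mul (mul_ne_zero hCpos.ne' hk0pow) (by positivity),
        Real.logb_mul hCpos.ne' hk0pow, Real.logb_pow, Real.logb_pow] at h1
      linarith
    have hA4 : (n:ℝ) * klB a p = (a*(n:ℝ)) * Real.logb 2 (a*(n:ℝ))
        + ((n:ℝ) - a*(n:ℝ)) * Real.logb 2 ((n:ℝ) - a*(n:ℝ))
        - (n:ℝ) * Real.logb 2 (n:ℝ) - (a*(n:ℝ)) * Real.logb 2 p
        - ((n:ℝ) - a*(n:ℝ)) * Real.logb 2 (1-p) := by
      have e0 : Real.logb 2 a = Real.logb 2 (a*(n:ℝ)) - Real.logb 2 (n:ℝ) := by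
        rw [← Real.logb_div (by positivity) (by positivity : (n:ℝ) ≠ 0)]
        congr 1
        field_simp
      have e0' : Real.logb 2 (1-a) = Real.logb 2 ((n:ℝ) - a*(n:ℝ)) - Real.logb 2 (n:ℝ) := by
        rw [← Real.logb_div hspos.ne' (by positivity : (n:ℝ) ≠ 0)]
        congr 1
        rw [eq_div_iff (by positivity : (n:ℝ) ≠ 0)]
        ring
      unfold klB
      rw [Real.logb_div ha.ne' hp.ne', Real.logb_div h1a.ne' hq.ne', e0, e0']
      ring
    have hA5 : -Real.logb 2 ((n:ℝ)+1)
        ≤ (a*(n:ℝ)) * Real.logb 2 (a*(n:ℝ)) - (k0:ℝ) * Real.logb 2 (k0:ℝ) := by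
      rcases Nat.eq_zero_or_pos k0 with hk | hk
      · have hz : (k0:ℝ) * Real.logb 2 (k0:ℝ) = 0 := by rw [hk]; simp
        rw [hz, sub_zero]
        have ht1 : a*(n:ℝ) ≤ 1 := by
          have h := htk0
          rw [hk] at h
          push_cast at h
          linarith
        have hx := xlogx_lb htpos ht1
        have heq : (a*(n:ℝ)) * Real.logb 2 (a*(n:ℝ))
            = ((a*(n:ℝ)) * Real.log (a*(n:ℝ)))/Real.log 2 := by
          unfold Real.logb; ring
        rw [heq]
        have hd1 : -(1/2)/Real.log 2 ≤ ((a*(n:ℝ)) * Real.log (a*(n:ℝ)))/Real.log 2 :=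
          (div_le_div_iff_of_pos_right hL).mpr hx
        have hd2 : (-1:ℝ) ≤ -(1/2)/Real.log 2 := by
          rw [neg_div, neg_le_neg_iff, div_le_one hL]
          linarith
        linarith
      · have hk1 : (1:ℝ) ≤ (k0:ℝ) := by exact_mod_cast hk
        have l0 : 0 ≤ Real.log (k0:ℝ) := Real.log_nonneg hk1
        have l1 : Real.log (k0:ℝ) ≤ Real.log (a*(n:ℝ)) :=
          Real.log_le_log (by positivity) hk0t
        have key : (k0:ℝ) * Real.log (k0:ℝ) ≤ (a*(n:ℝ)) * Real.log (a*(n:ℝ)) := by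
          nlinarith
        have heq : (a*(n:ℝ)) * Real.logb 2 (a*(n:ℝ)) - (k0:ℝ) * Real.logb 2 (k0:ℝ)
            = ((a*(n:ℝ)) * Real.log (a*(n:ℝ)) - (k0:ℝ) * Real.log (k0:ℝ))/Real.log 2 := by
          unfold Real.logb; ring
        have h2 : 0 ≤ (a*(n:ℝ)) * Real.logb 2 (a*(n:ℝ)) - (k0:ℝ) * Real.logb 2 (k0:ℝ) := by
          rw [heq]
          exact div_nonneg (by linarith) hL.le
        linarith
    have hA6 : -(2 * Real.logb 2 ((n:ℝ)+1))
        ≤ ((n:ℝ) - a*(n:ℝ)) * Real.logb 2 ((n:ℝ) - a*(n:ℝ)) - (m:ℝ) * Real.logb 2 (m:ℝ) := by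
      have hmu := mlogm_ub hspos hsm
      have hms0 : 0 ≤ (m:ℝ) - ((n:ℝ) - a*(n:ℝ)) := by linarith
      have hms1 : (m:ℝ) - ((n:ℝ) - a*(n:ℝ)) ≤ 1 := by
        rw [hmcast]; linarith
      have hlnm : 0 ≤ Real.log (m:ℝ) := Real.log_nonneg hm1'
      have hmn : (m:ℝ) ≤ (n:ℝ) := by exact_mod_cast Nat.sub_le n k0
      have hlnmn : Real.log (m:ℝ) ≤ Real.log (n:ℝ) := Real.log_le_log (by linarith) hmn
      have hln_ineq : Real.log (n:ℝ) + 1 ≤ 2 * Real.log ((n:ℝ)+1) := by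
        have h1 : (4:ℝ)*(n:ℝ) ≤ ((n:ℝ)+1)^2 := by nlinarith [sq_nonneg ((n:ℝ)-1)]
        have h2 : Real.log ((4:ℝ)*(n:ℝ)) ≤ Real.log (((n:ℝ)+1)^2) :=
          Real.log_le_log (by positivity) h1
        rw [Real.log_mul (by norm_num) (by positivity), Real.log_pow] at h2
        have h5 : (1:ℝ) ≤ Real.log 4 := by
          rw [show (4:ℝ) = 2*2 by norm_num, Real.log_mul two_ne_zero two_ne_zero]
          linarith
        push_cast at h2
        linarith
      have hprod : 0 ≤ (1 - ((m:ℝ) - ((n:ℝ)-a*(n:ℝ)))) * (Real.log (m:ℝ) + 1) :=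
        mul_nonneg (by linarith) (by linarith)
      have key : (m:ℝ)*Real.log (m:ℝ) - ((n:ℝ)-a*(n:ℝ))*Real.log ((n:ℝ)-a*(n:ℝ))
          ≤ 2*Real.log ((n:ℝ)+1) := by
        linarith [hmu, hprod, hlnmn, hln_ineq]
      have heq : ((n:ℝ) - a*(n:ℝ)) * Real.logb 2 ((n:ℝ) - a*(n:ℝ)) - (m:ℝ) * Real.logb 2 (m:ℝ)
          = (((n:ℝ)-a*(n:ℝ))*Real.log ((n:ℝ)-a*(n:ℝ)) - (m:ℝ)*Real.log (m:ℝ))/Real.log 2 := by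
        unfold Real.logb; ring
      have heq2 : -(2 * Real.logb 2 ((n:ℝ)+1)) = (-(2 * Real.log ((n:ℝ)+1)))/Real.log 2 := by
        unfold Real.logb; ring
      rw [heq, heq2]
      exact (div_le_div_iff_of_pos_right hL).mpr (by linarith)
    have hA7 : -max 0 (Real.logb 2 (p/(1-p)))
        ≤ (k0:ℝ)*Real.logb 2 p - (a*(n:ℝ))*Real.logb 2 p
          + (m:ℝ)*Real.logb 2 (1-p) - ((n:ℝ)-a*(n:ℝ))*Real.logb 2 (1-p) := by
      have hd0 : 0 ≤ a*(n:ℝ) - (k0:ℝ) := by linarith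
      have hd1 : a*(n:ℝ) - (k0:ℝ) ≤ 1 := by linarith
      have heq : (k0:ℝ)*Real.logb 2 p - (a*(n:ℝ))*Real.logb 2 p
          + (m:ℝ)*Real.logb 2 (1-p) - ((n:ℝ)-a*(n:ℝ))*Real.logb 2 (1-p)
          = -((a*(n:ℝ)-(k0:ℝ)) * Real.logb 2 (p/(1-p))) := by
        rw [Real.logb_div hp.ne' hq.ne', hmcast]
        ring
      rw [heq]
      rcases le_or_gt 0 (Real.logb 2 (p/(1-p))) with h | h
      · rw [max_eq_right h]
        have hprod : 0 ≤ (1 - (a*(n:ℝ)-(k0:ℝ))) * Real.logb 2 (p/(1-p)) :=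
          mul_nonneg (by linarith) h
        linarith [hprod]
      · rw [max_eq_left h.le]
        have := mul_nonpos_of_nonneg_of_nonpos hd0 h.le
        linarith
    have hcher := chernoff n p a hp hp1 ha hap
    rw [abs_le]
    constructor
    · linarith only [hA1, hA2, hA3, hA4, hA5, hA6, hA7]
    · linarith only [hcher, hRHS0]
end

section
/- Let X₁,…,X_r be i.i.d. Bin(n,p), 0 < p < 1, Z = min_i X_i, δ ∈ (0,1). Suppose there exists b ∈ [0,p) with KL(b‖p) = (log₂ r - log₂ ln(2/δ) - 4 log₂(n+1) - max(0, log₂(p/(1-p))))/n. Then P(Z > b·n) ≤ δ/2. -/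
open MeasureTheory ProbabilityTheory

/-! The events `X i > b n` are independent and each one excludes the atom `X i = ⌊b n⌋`
of probability `q = P(Bin(n, p) = ⌊b n⌋)`, so `P(Z > b n) ≤ (1 - q)^r ≤ exp(-r q)`.
The method of types gives `q ≥ 2^(-n KL(b‖p)) / (n (n + 1) max(1, p/(1-p)))`, and the
defining equation of `b` turns this into `r q ≥ ln(2/δ)`. -/

open Real Finset

lemma mul_le_max_zero {t : ℝ} (ht0 : 0 ≤ t) (ht1 : t ≤ 1) (c : ℝ) : t * c ≤ max 0 c := by
  rcases le_total 0 c with hc | hc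
  · exact (mul_le_of_le_one_left hc ht1).trans (le_max_right _ _)
  · exact (mul_nonpos_of_nonneg_of_nonpos ht0 hc).trans (le_max_left _ _)

lemma mul_log_sub_log_le_sub {b x : ℝ} (hb : 0 ≤ b) (hx : 0 < x) :
    b * (log x - log b) ≤ x - b := by
  rcases hb.eq_or_lt with rfl | hb
  · simpa using hx.le
  · have h := log_le_sub_one_of_pos (div_pos hx hb)
    rw [log_div hx.ne' hb.ne'] at h
    calc b * (log x - log b) ≤ b * (x / b - 1) := mul_le_mul_of_nonneg_left h hb.le
      _ = x - b := by field_simp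

lemma mul_log_sub_log_lt_sub {b x : ℝ} (hb : 0 < b) (hx : 0 < x) (hxb : x ≠ b) :
    b * (log x - log b) < x - b := by
  have h := log_lt_sub_one_of_pos (div_pos hx hb) (by rwa [ne_eq, div_eq_one_iff_eq hb.ne'])
  rw [log_div hx.ne' hb.ne'] at h
  calc b * (log x - log b) < b * (x / b - 1) := mul_lt_mul_of_pos_left h hb
    _ = x - b := by field_simp

lemma mul_log_div_eq {a c : ℝ} (hc : c ≠ 0) : a * log (a / c) = a * (log a - log c) := by
  rcases eq_or_ne a 0 with rfl | ha
  · simp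
  · rw [log_div ha hc]

lemma klB_mul_log_two (b : ℝ) {p : ℝ} (hp0 : p ≠ 0) (hp1 : p ≠ 1) :
    klB b p * log 2 = b * (log b - log p) + (1 - b) * (log (1 - b) - log (1 - p)) := by
  have hlog2 : log 2 ≠ 0 := (log_pos one_lt_two).ne'
  rw [← mul_log_div_eq hp0, ← mul_log_div_eq (sub_ne_zero.2 hp1.symm), klB, logb, logb]
  field_simp

lemma klB_pos {b p : ℝ} (hb0 : 0 ≤ b) (hbp : b < p) (hp1 : p < 1) : 0 < klB b p := by
  have hp0 : 0 < p := hb0.trans_lt hbp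
  have h₁ := mul_log_sub_log_le_sub hb0 hp0
  have h₂ := mul_log_sub_log_lt_sub (sub_pos.2 (hbp.trans hp1)) (sub_pos.2 hp1)
    (by linarith : 1 - p ≠ 1 - b)
  have h := klB_mul_log_two b hp0.ne' hp1.ne
  exact pos_of_mul_pos_left (by linarith) (log_pos one_lt_two).le

/-- Gibbs' inequality `KL(b‖x) ≥ 0`, since `KL(b‖p) - KL(b‖x)` is the right-hand side. -/
lemma neg_klB_mul_log_two_le {b p x : ℝ} (hb0 : 0 ≤ b) (hb1 : b ≤ 1) (hp0 : 0 < p)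
    (hp1 : p < 1) (hx0 : 0 < x) (hx1 : x < 1) :
    -(klB b p * log 2) ≤ b * (log p - log x) + (1 - b) * (log (1 - p) - log (1 - x)) := by
  have h₁ := mul_log_sub_log_le_sub hb0 hx0
  have h₂ := mul_log_sub_log_le_sub (sub_nonneg.2 hb1) (sub_pos.2 hx1)
  rw [klB_mul_log_two b hp0.ne' hp1.ne]
  linarith

lemma sum_binPMF (n : ℕ) (x : ℝ) : ∑ j ∈ range (n + 1), binPMF n j x = 1 := by
  have h := add_pow x (1 - x) n
  rw [add_sub_cancel, one_pow] at h
  rw [h]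
  exact sum_congr rfl fun j _ => by rw [binPMF]; ring

lemma binPMF_nonneg_s17 (n k : ℕ) {x : ℝ} (hx0 : 0 ≤ x) (hx1 : x ≤ 1) : 0 ≤ binPMF n k x := by
  have : 0 ≤ 1 - x := sub_nonneg.2 hx1
  unfold binPMF
  positivity

lemma binPMF_pos {n k : ℕ} (hk : k ≤ n) {x : ℝ} (hx0 : 0 < x) (hx1 : x < 1) :
    0 < binPMF n k x := by
  have : 0 < 1 - x := sub_pos.2 hx1
  have : (0 : ℝ) < n.choose k := by exact_mod_cast Nat.choose_pos hk
  unfold binPMF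
  positivity

lemma binPMF_le_one {n k : ℕ} (hk : k ≤ n) {x : ℝ} (hx0 : 0 ≤ x) (hx1 : x ≤ 1) :
    binPMF n k x ≤ 1 :=
  sum_binPMF n x ▸ single_le_sum (fun j _ => binPMF_nonneg_s17 n j hx0 hx1)
    (mem_range.2 (Nat.lt_succ_of_le hk))

lemma log_binPMF {n k : ℕ} (hk : k ≤ n) {x : ℝ} (hx0 : 0 < x) (hx1 : x < 1) :
    log (binPMF n k x) = log (n.choose k) + k * log x + (n - k : ℕ) * log (1 - x) := by
  have : (0 : ℝ) < n.choose k := by exact_mod_cast Nat.choose_pos hk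
  have : 0 < 1 - x := sub_pos.2 hx1
  rw [binPMF, log_mul (by positivity) (by positivity), log_mul (by positivity) (by positivity),
    log_pow, log_pow]

lemma binPMF_succ_mul (n j : ℕ) (x : ℝ) :
    binPMF n (j + 1) x * ((j + 1) * (1 - x)) = binPMF n j x * ((n - j : ℕ) * x) := by
  rcases lt_or_ge j n with hjn | hnj
  · obtain ⟨m, rfl⟩ : ∃ m, n = j + 1 + m := ⟨n - (j + 1), by omega⟩
    have hc : ((j + 1 + m).choose (j + 1) : ℝ) * (j + 1) = (j + 1 + m).choose j * (m + 1) := by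
      exact_mod_cast (Nat.choose_succ_right_eq (j + 1 + m) j).trans (by congr 1; omega)
    simp only [binPMF, show j + 1 + m - (j + 1) = m by omega, show j + 1 + m - j = m + 1 by omega]
    push_cast
    linear_combination (x ^ (j + 1) * (1 - x) ^ (m + 1)) * hc
  · simp [binPMF, Nat.choose_eq_zero_of_lt (Nat.lt_succ_of_le hnj), Nat.sub_eq_zero_of_le hnj]

/-- `K` is a mode of `Bin(n, (K+1)/(n+1))`: the ratio of consecutive terms is
`(n - j)(K + 1) / ((j + 1)(n - K))`, which is `≥ 1` exactly when `j ≤ K`. -/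
lemma binPMF_le_binPMF_mode {n K : ℕ} (hK : K < n) (j : ℕ) :
    binPMF n j ((K + 1) / (n + 1)) ≤ binPMF n K ((K + 1) / (n + 1)) := by
  obtain ⟨x, hx⟩ : ∃ x : ℝ, x = (K + 1) / (n + 1) := ⟨_, rfl⟩
  rw [← hx]
  have hx0 : 0 ≤ x := hx ▸ by positivity
  have hx1 : x ≤ 1 := hx ▸ div_le_one_of_le₀ (by norm_cast; omega) (by positivity)
  have hnx : (n + 1) * x = K + 1 := by rw [hx]; field_simp
  have hratio (j : ℕ) : binPMF n (j + 1) x * ((j + 1) * (n - K) : ℕ)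
      = binPMF n j x * ((n - j) * (K + 1) : ℕ) := by
    have h := binPMF_succ_mul n j x
    push_cast [Nat.cast_sub hK.le]
    linear_combination (n + 1) * h
      + (binPMF n (j + 1) x * (j + 1) + binPMF n j x * (n - j : ℕ)) * hnx
  have hpos (j : ℕ) : (0 : ℝ) < ((j + 1) * (n - K) : ℕ) := by
    have := Nat.sub_pos_of_lt hK
    positivity
  rcases le_total j K with hjK | hKj
  · induction hjK using Nat.decreasingInduction with
    | self => rfl
    | of_succ j hjK ih =>
      refine le_trans (le_of_mul_le_mul_right ?_ (hpos j)) ih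
      rw [hratio]
      refine mul_le_mul_of_nonneg_left ?_ (binPMF_nonneg_s17 n j hx0 hx1)
      exact_mod_cast (Nat.mul_le_mul (by omega : j + 1 ≤ K + 1)
        (by omega : n - K ≤ n - j)).trans_eq (Nat.mul_comm _ _)
  · induction j, hKj using Nat.le_induction with
    | base => rfl
    | succ j hKj ih =>
      refine le_trans (le_of_mul_le_mul_right ?_ (hpos j)) ih
      rw [hratio]
      refine mul_le_mul_of_nonneg_left ?_ (binPMF_nonneg_s17 n j hx0 hx1)
      exact_mod_cast (Nat.mul_le_mul (by omega : n - j ≤ n - K)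
        (by omega : K + 1 ≤ j + 1)).trans_eq (Nat.mul_comm _ _)

lemma inv_succ_le_binPMF_mode {n K : ℕ} (hK : K < n) :
    (n + 1 : ℝ)⁻¹ ≤ binPMF n K ((K + 1) / (n + 1)) := by
  have h := sum_le_sum fun j (_ : j ∈ range (n + 1)) => binPMF_le_binPMF_mode hK j
  rw [sum_binPMF, sum_const, card_range, nsmul_eq_mul] at h
  push_cast at h
  rwa [inv_le_iff_one_le_mul₀' (by positivity)]

/-- Compare `p` with the auxiliary success probability `x = (K+1)/(n+1)`, `K = ⌊bn⌋`:
Gibbs' inequality `KL(b‖x) ≥ 0` trades the exponent for a likelihood ratio at `x`, `K` is a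
mode of `Bin(n, x)`, and the fractional part `bn - K ∈ [0, 1]` costs at most the factors
`max(1, p/(1-p))` and `(n - K)/(K + 1) ≤ n`. -/
theorem neg_mul_klB_mul_log_two_le {n : ℕ} {b p : ℝ} (hn : n ≠ 0) (hb0 : 0 ≤ b)
    (hb1 : b < 1) (hp0 : 0 < p) (hp1 : p < 1) :
    -(n * klB b p * log 2)
      ≤ log (binPMF n ⌊b * n⌋₊ p) + log n + log (n + 1) + max 0 (log (p / (1 - p))) := by
  set K := ⌊b * n⌋₊
  set x : ℝ := (K + 1) / (n + 1) with hx
  have hn0 : (0 : ℝ) < n := by positivity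
  have hbn : 0 ≤ b * n := by positivity
  have hK : K < n := (Nat.floor_lt hbn).2 (by nlinarith)
  have hKn : ((n - K : ℕ) : ℝ) = n - K := Nat.cast_sub hK.le
  have hKn' : (K : ℝ) + 1 ≤ n := by exact_mod_cast hK
  have ht0 : 0 ≤ b * n - K := sub_nonneg.2 (Nat.floor_le hbn)
  have ht1 : b * n - K ≤ 1 := by linarith [Nat.lt_floor_add_one (b * n)]
  have hx0 : 0 < x := by positivity
  have hx1 : x < 1 := (div_lt_one (by positivity)).2 (by linarith)
  have hgibbs := neg_klB_mul_log_two_le hb0 hb1.le hp0 hp1 hx0 hx1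
  have hlik : log (binPMF n K p) - log (binPMF n K x)
      = K * (log p - log x) + (n - K) * (log (1 - p) - log (1 - x)) := by
    rw [log_binPMF hK.le hp0 hp1, log_binPMF hK.le hx0 hx1, hKn]
    ring
  have hmode : -log (n + 1) ≤ log (binPMF n K x) := by
    rw [← log_inv]
    exact log_le_log (by positivity) (inv_succ_le_binPMF_mode hK)
  have hodds : log (1 - x) - log x ≤ log n := by
    have h1x : 1 - x = (n - K) / (n + 1) := by rw [hx]; field_simp; ring
    rw [← log_div (by linarith) hx0.ne', h1x, div_div_div_cancel_right₀ (by positivity)]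
    exact log_le_log (div_pos (by linarith) (by positivity))
      ((div_le_self (by linarith) (by linarith)).trans (by linarith))
  calc -(n * klB b p * log 2) = n * -(klB b p * log 2) := by ring
    _ ≤ n * (b * (log p - log x) + (1 - b) * (log (1 - p) - log (1 - x))) := by gcongr
    _ = (K * (log p - log x) + (n - K) * (log (1 - p) - log (1 - x)))
          + (b * n - K) * (log p - log (1 - p)) + (b * n - K) * (log (1 - x) - log x) := by ring
    _ ≤ log (binPMF n K p) + log n + log (n + 1) + max 0 (log (p / (1 - p))) := by
      rw [← hlik, ← log_div hp0.ne' (by linarith)]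
      linarith [mul_le_max_zero ht0 ht1 (log (p / (1 - p))),
        mul_le_max_zero ht0 ht1 (log (1 - x) - log x), max_le (log_natCast_nonneg n) hodds]

theorem neg_mul_klB_le_logb_binPMF {n : ℕ} {b p : ℝ} (hn : n ≠ 0) (hb0 : 0 ≤ b)
    (hb1 : b < 1) (hp0 : 0 < p) (hp1 : p < 1) :
    -(n * klB b p) ≤ logb 2 (binPMF n ⌊b * n⌋₊ p) + logb 2 n + logb 2 (n + 1)
      + max 0 (logb 2 (p / (1 - p))) := by
  have hlog2 := log_pos one_lt_two
  calc -(n * klB b p) = -(n * klB b p * log 2) / log 2 := by field_simp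
    _ ≤ (log (binPMF n ⌊b * n⌋₊ p) + log n + log (n + 1) + max 0 (log (p / (1 - p))))
          / log 2 := by
      gcongr
      exact neg_mul_klB_mul_log_two_le hn hb0 hb1 hp0 hp1
    _ = _ := by simp only [logb, add_div, ← max_div_div_right hlog2.le, zero_div]

theorem log_two_div_le_mul_binPMF {r n : ℕ} {p δ b : ℝ} (hp : 0 < p) (hp1 : p < 1)
    (hδ0 : 0 < δ) (hδ1 : δ < 1) (hb0 : 0 ≤ b) (hbp : b < p)
    (hklb : klB b p = (logb 2 r - logb 2 (log (2 / δ))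
      - 4 * logb 2 ((n : ℝ) + 1) - max 0 (logb 2 (p / (1 - p)))) / n) :
    log (2 / δ) ≤ r * binPMF n ⌊b * n⌋₊ p := by
  have hn : n ≠ 0 := by
    rintro rfl
    rw [Nat.cast_zero, div_zero] at hklb
    exact (klB_pos hb0 hbp hp1).ne' hklb
  set q := binPMF n ⌊b * n⌋₊ p
  set L := log (2 / δ)
  have hK : ⌊b * n⌋₊ ≤ n :=
    Nat.floor_le_of_le (mul_le_of_le_one_left n.cast_nonneg (hbp.trans hp1).le)
  have hq0 : 0 < q := binPMF_pos hK hp hp1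
  have hq1 : q ≤ 1 := binPMF_le_one hK hp.le hp1.le
  have hL : 1 / 4 < L := by
    have : log 2 ≤ L := log_le_log two_pos (by rw [le_div_iff₀ hδ0]; linarith)
    linarith [log_two_gt_d9]
  have hn1 : 1 ≤ logb 2 (n + 1) := by
    rw [le_logb_iff_rpow_le one_lt_two (by positivity), rpow_one]
    exact_mod_cast Nat.succ_le_succ (Nat.one_le_iff_ne_zero.2 hn)
  have hbits : logb 2 L + 2 * logb 2 (n + 1) ≤ logb 2 r + logb 2 q := by
    have hkey := neg_mul_klB_le_logb_binPMF hn hb0 (hbp.trans hp1) hp hp1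
    have hmono : logb 2 n ≤ logb 2 (n + 1) :=
      logb_le_logb_of_le one_lt_two (by positivity) (by linarith)
    have hnkl : n * klB b p = logb 2 r - logb 2 L - 4 * logb 2 ((n : ℝ) + 1)
        - max 0 (logb 2 (p / (1 - p))) := by
      rw [hklb]; field_simp
    linarith
  have hr : r ≠ 0 := by
    rintro rfl
    have : -2 < logb 2 L := by
      rw [lt_logb_iff_rpow_lt one_lt_two (by linarith)]
      rw [rpow_neg two_pos.le, rpow_two]
      linarith
    rw [Nat.cast_zero, logb_zero] at hbits
    linarith [logb_nonpos one_lt_two hq0.le hq1]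
  rw [← logb_le_logb one_lt_two (by linarith) (by positivity), logb_mul (by positivity) hq0.ne']
  linarith

theorem measure_forall_ne_le_exp {Ω ι β : Type*} [MeasurableSpace Ω] {μ : Measure Ω}
    [IsProbabilityMeasure μ] [Fintype ι] [MeasurableSpace β] [MeasurableSingletonClass β]
    {X : ι → Ω → β} (hXm : ∀ i, Measurable (X i)) (hindep : iIndepFun X μ) {k : β}
    {q : ℝ} (hq0 : 0 ≤ q) (hq1 : q ≤ 1)
    (hq : ∀ i, ENNReal.ofReal q ≤ μ {ω | X i ω = k}) :
    (μ {ω | ∀ i, X i ω ≠ k}).toReal ≤ exp (-(Fintype.card ι * q)) := by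
  have hcompl (i : ι) : μ (X i ⁻¹' {k}ᶜ) ≤ ENNReal.ofReal (1 - q) := by
    rw [Set.preimage_compl, prob_compl_eq_one_sub (hXm i (measurableSet_singleton k)),
      ENNReal.ofReal_sub _ hq0, ENNReal.ofReal_one]
    exact tsub_le_tsub_left (hq i) 1
  have hinter : μ {ω | ∀ i, X i ω ≠ k} = ∏ i, μ (X i ⁻¹' {k}ᶜ) := by
    rw [← hindep.meas_iInter fun i => ⟨{k}ᶜ, (measurableSet_singleton k).compl, rfl⟩]
    congr 1
    ext ω
    simp
  calc (μ {ω | ∀ i, X i ω ≠ k}).toReal ≤ (1 - q) ^ Fintype.card ι := by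
        refine ENNReal.toReal_le_of_le_ofReal (pow_nonneg (sub_nonneg.2 hq1) _) ?_
        rw [hinter, ENNReal.ofReal_pow (sub_nonneg.2 hq1), ← card_univ, ← prod_const]
        exact prod_le_prod' fun i _ => hcompl i
    _ ≤ exp (-q) ^ Fintype.card ι :=
        pow_le_pow_left₀ (sub_nonneg.2 hq1) (one_sub_le_exp_neg q) _
    _ = exp (-(Fintype.card ι * q)) := by rw [← exp_nat_mul]; ring_nf

theorem min_binomial_lower_event (r n : ℕ) (p δ b : ℝ)
    (hp : 0 < p) (hp1 : p < 1) (hδ0 : 0 < δ) (hδ1 : δ < 1)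
    (hb : b ∈ Set.Ico (0 : ℝ) p)
    (hklb : klB b p = (Real.logb 2 r - Real.logb 2 (Real.log (2 / δ))
      - 4 * Real.logb 2 ((n : ℝ) + 1) - max 0 (Real.logb 2 (p / (1 - p)))) / n)
    (Ω : Type*) [MeasurableSpace Ω] (μ : Measure Ω) [IsProbabilityMeasure μ]
    (X : Fin r → Ω → ℕ) (hXm : ∀ i, Measurable (X i))
    (hindep : iIndepFun X μ)
    (hmarg : ∀ i k, μ {ω | X i ω = k} = ENNReal.ofReal (binPMF n k p)) :
    (μ {ω | ∀ i, b * n < (X i ω : ℝ)}).toReal ≤ δ / 2 := by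
  obtain ⟨hb0, hbp⟩ := hb
  set K := ⌊b * n⌋₊
  have hsub : {ω | ∀ i, b * n < (X i ω : ℝ)} ⊆ {ω | ∀ i, X i ω ≠ K} :=
    fun ω hω i hi => (hω i).not_ge (hi ▸ Nat.floor_le (by positivity))
  have hK : K ≤ n :=
    Nat.floor_le_of_le (mul_le_of_le_one_left n.cast_nonneg (hbp.trans hp1).le)
  calc (μ {ω | ∀ i, b * n < (X i ω : ℝ)}).toReal
      ≤ (μ {ω | ∀ i, X i ω ≠ K}).toReal :=
        ENNReal.toReal_mono (measure_ne_top _ _) (measure_mono hsub)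
    _ ≤ exp (-(r * binPMF n K p)) := by
      simpa only [Fintype.card_fin] using measure_forall_ne_le_exp hXm hindep
        (binPMF_nonneg_s17 n K hp.le hp1.le) (binPMF_le_one hK hp.le hp1.le) fun i => (hmarg i K).ge
    _ ≤ exp (-log (2 / δ)) := by
      gcongr
      exact log_two_div_le_mul_binPMF hp hp1 hδ0 hδ1 hb0 hbp hklb
    _ = δ / 2 := by rw [exp_neg, exp_log (by positivity), inv_div]
end
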